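/- arXiv:2005.09281 — 2 statements merged into one kernel-verified Lean document; each statement's English description precedes it below -/
import Mathlib

section
/- Let μ be a weight measure over a finite alphabet Σ with values in a linearly ordered cancellative commutative monoid A. Every word w ∈ Σ* satisfies |P_μ(w)| = 1 if and only if μ is both gapfree and injective on Σ. (In that case the unique element of P_μ(w) is called the μ-prefix normal form of w.) -/
def weight {α A : Type*} [CommMonoid A] [LinearOrder A] [IsOrderedCancelMonoid A] (μ : α → A) (w : List α) : A :=
  (w.map μ).prod

/-- `f_{w,μ}(i)`, the maximum weight of a length-`i` factor of `w` (and `1` for `i > |w|`). -/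
def factorWeight {α A : Type*} [CommMonoid A] [LinearOrder A] [IsOrderedCancelMonoid A] (μ : α → A)
    (w : List α) (i : ℕ) : A :=
  ((List.range (w.length + 1 - i)).map fun j => weight μ ((w.drop j).take i)).foldr max 1

def PrefixNormal {α A : Type*} [CommMonoid A] [LinearOrder A] [IsOrderedCancelMonoid A] (μ : α → A)
    (w : List α) : Prop :=
  ∀ i ≤ w.length, factorWeight μ w i = weight μ (w.take i)

def Gapfree {α A : Type*} [CommMonoid A] [LinearOrder A] [IsOrderedCancelMonoid A] (μ : α → A) : Prop :=
  ∀ w : List α, ∀ i, 1 ≤ i → i ≤ w.length →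
    ∃ a : α, factorWeight μ w i = factorWeight μ w (i - 1) * μ a

/-- The set `P_μ(w)`. -/
def pnClass {α A : Type*} [CommMonoid A] [LinearOrder A] [IsOrderedCancelMonoid A] (μ : α → A)
    (w : List α) : Set (List α) :=
  {v | (∀ i, factorWeight μ v i = factorWeight μ w i) ∧ PrefixNormal μ v}

/-! In a `μ`-prefix-normal word `v` one has `f_v(i + 1) = f_v(i) · μ(v[i])`, so any element of
`P_μ(w)` supplies the letters demanded by gapfreeness; and if `μ a = μ b` then `[a]` and `[b]`
both lie in `P_μ([a])`. Conversely, gapfreeness builds letter by letter a word `v` whose prefix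
weights are `f_w`; since `f_w` is submultiplicative, cancelling the prefix of length `j` shows
that no factor of `v` outweighs `f_w`, so `v ∈ P_μ(w)`. Two elements of `P_μ(w)` have the same
prefix weights, and cancellation then gives `μ u[k] = μ v[k]` letter by letter. -/

namespace List

variable {β : Type*} [LinearOrder β]

theorem foldr_max_le_iff {l : List β} {b x : β} :
    l.foldr max b ≤ x ↔ b ≤ x ∧ ∀ y ∈ l, y ≤ x := by
  induction l with
  | nil => simp
  | cons y l ih => simp only [foldr, max_le_iff, ih, forall_mem_cons]; tauto

theorem foldr_max_mem (l : List β) (b : β) : l.foldr max b ∈ b :: l := by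
  induction l with
  | nil => exact mem_singleton_self b
  | cons y l ih =>
    rcases max_choice y (l.foldr max b) with h | h <;> rw [foldr, h]
    · simp
    · rcases mem_cons.mp ih with h' | h' <;> simp [h']

end List

section WeightMeasure

variable {α A : Type*} [CommMonoid A] [LinearOrder A] [IsOrderedCancelMonoid A] {μ : α → A}

@[simp]
theorem weight_nil : weight μ [] = 1 := rfl

@[simp]
theorem weight_singleton (a : α) : weight μ [a] = μ a := by
  simp [weight]

theorem weight_append (u v : List α) : weight μ (u ++ v) = weight μ u * weight μ v := by
  simp [weight]

theorem weight_take_succ {u : List α} {k : ℕ} (h : k < u.length) :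
    weight μ (u.take (k + 1)) = weight μ (u.take k) * μ u[k] := by
  simp only [weight, List.map_take]
  rw [List.prod_take_succ _ _ (by simpa using h), List.getElem_map]

theorem weight_eq_of_map_eq {u v : List α} (h : u.map μ = v.map μ) : weight μ u = weight μ v := by
  rw [weight, weight, h]

theorem one_lt_weight (hμ : ∀ a, 1 < μ a) : ∀ {u : List α}, u ≠ [] → 1 < weight μ u
  | [a], _ => by simpa using hμ a
  | a :: b :: u, _ => by
    rw [← List.singleton_append, weight_append, weight_singleton]
    exact one_lt_mul_of_lt_of_le' (hμ a) (one_lt_weight hμ (List.cons_ne_nil b u)).le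

theorem one_le_factorWeight (w : List α) (i : ℕ) : 1 ≤ factorWeight μ w i :=
  (List.foldr_max_le_iff.mp le_rfl).1

theorem weight_factor_le_factorWeight {w : List α} {i j : ℕ} (h : j + i ≤ w.length) :
    weight μ ((w.drop j).take i) ≤ factorWeight μ w i :=
  (List.foldr_max_le_iff.mp le_rfl).2 _ <|
    List.mem_map.mpr ⟨j, List.mem_range.mpr (by omega), rfl⟩

theorem weight_take_le_factorWeight {w : List α} {i : ℕ} (h : i ≤ w.length) :
    weight μ (w.take i) ≤ factorWeight μ w i := by
  simpa using weight_factor_le_factorWeight (μ := μ) (j := 0) (by omega : 0 + i ≤ w.length)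

theorem factorWeight_le {w : List α} {i : ℕ} {x : A} (h1 : 1 ≤ x)
    (h : ∀ j, j + i ≤ w.length → weight μ ((w.drop j).take i) ≤ x) :
    factorWeight μ w i ≤ x := by
  refine List.foldr_max_le_iff.mpr ⟨h1, ?_⟩
  simp only [List.mem_map, List.mem_range]
  rintro _ ⟨j, hj, rfl⟩
  exact h j (by omega)

theorem factorWeight_eq_one_or_exists (w : List α) (i : ℕ) :
    factorWeight μ w i = 1 ∨
      ∃ j, j + i ≤ w.length ∧ factorWeight μ w i = weight μ ((w.drop j).take i) := by
  rcases List.mem_cons.mp (List.foldr_max_mem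
      ((List.range (w.length + 1 - i)).map fun j => weight μ ((w.drop j).take i)) 1) with h | h
  · exact .inl h
  · obtain ⟨j, hj, hj'⟩ := List.mem_map.mp h
    exact .inr ⟨j, by rw [List.mem_range] at hj; omega, hj'.symm⟩

@[simp]
theorem factorWeight_zero (w : List α) : factorWeight μ w 0 = 1 :=
  le_antisymm (factorWeight_le le_rfl fun _ _ => by simp) (one_le_factorWeight w 0)

theorem factorWeight_of_length_lt {w : List α} {i : ℕ} (h : w.length < i) :
    factorWeight μ w i = 1 := by
  simp [factorWeight, Nat.sub_eq_zero_of_le (by omega : w.length + 1 ≤ i)]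

theorem factorWeight_add_le (w : List α) (i j : ℕ) :
    factorWeight μ w (i + j) ≤ factorWeight μ w i * factorWeight μ w j := by
  rcases factorWeight_eq_one_or_exists (μ := μ) w (i + j) with h | ⟨k, hk, h⟩
  · exact h ▸ one_le_mul (one_le_factorWeight w i) (one_le_factorWeight w j)
  · rw [h, List.take_add, weight_append, List.drop_drop]
    exact mul_le_mul' (weight_factor_le_factorWeight (by omega))
      (weight_factor_le_factorWeight (by omega))

theorem one_lt_factorWeight (hμ : ∀ a, 1 < μ a) {w : List α} {i : ℕ} (hi : 0 < i)
    (h : i ≤ w.length) : 1 < factorWeight μ w i :=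
  (one_lt_weight hμ (List.ne_nil_of_length_pos (by rw [List.length_take]; omega))).trans_le
    (weight_take_le_factorWeight h)

theorem length_le_of_factorWeight_eq (hμ : ∀ a, 1 < μ a) {v w : List α}
    (h : ∀ i, factorWeight μ v i = factorWeight μ w i) : w.length ≤ v.length := by
  by_contra! hlt
  have := one_lt_factorWeight hμ (by omega) le_rfl (w := w)
  rw [← h, factorWeight_of_length_lt hlt] at this
  exact this.false

theorem length_eq_of_factorWeight_eq (hμ : ∀ a, 1 < μ a) {v w : List α}
    (h : ∀ i, factorWeight μ v i = factorWeight μ w i) : v.length = w.length :=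
  le_antisymm (length_le_of_factorWeight_eq hμ fun i => (h i).symm)
    (length_le_of_factorWeight_eq hμ h)

theorem factorWeight_eq_of_map_eq {v w : List α} (h : v.map μ = w.map μ) :
    factorWeight μ v = factorWeight μ w := by
  have hlen : v.length = w.length := by simpa using congrArg List.length h
  funext i
  unfold factorWeight
  rw [hlen]
  congr 1
  refine List.map_congr_left fun j _ => weight_eq_of_map_eq ?_
  simp only [List.map_take, List.map_drop, h]

theorem PrefixNormal.factorWeight_succ {v : List α} (hv : PrefixNormal μ v) {i : ℕ}
    (h : i < v.length) : factorWeight μ v (i + 1) = factorWeight μ v i * μ v[i] := by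
  rw [hv (i + 1) h, hv i h.le, weight_take_succ h]

theorem prefixNormal_singleton (hμ : ∀ a, 1 < μ a) (a : α) : PrefixNormal μ [a] := by
  intro i hi
  rw [List.length_singleton] at hi
  interval_cases i
  · simp
  · simpa [factorWeight] using (hμ a).le

theorem mem_pnClass_of_weight_take_eq {v w : List α} (hlen : v.length = w.length)
    (h : ∀ k ≤ w.length, weight μ (v.take k) = factorWeight μ w k) : v ∈ pnClass μ w := by
  have hf : ∀ i, factorWeight μ v i = factorWeight μ w i := by
    intro i
    rcases le_or_gt i w.length with hi | hi
    · refine le_antisymm (factorWeight_le (one_le_factorWeight w i) fun j hj => ?_) ?_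
      · have := factorWeight_add_le (μ := μ) w j i
        rw [← h _ (by omega), ← h _ (by omega), List.take_add, weight_append] at this
        exact le_of_mul_le_mul_left' this
      · exact h i hi ▸ weight_take_le_factorWeight (by omega)
    · rw [factorWeight_of_length_lt (by omega), factorWeight_of_length_lt hi]
  exact ⟨hf, fun i hi => by rw [hf, h i (by omega)]⟩

theorem exists_weight_take_eq_factorWeight (hgf : Gapfree μ) (w : List α) :
    ∀ n ≤ w.length, ∃ v : List α, v.length = n ∧ ∀ k ≤ n, weight μ (v.take k) = factorWeight μ w k
  | 0, _ => ⟨[], rfl, fun k hk => by simp [Nat.le_zero.mp hk]⟩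
  | n + 1, hn => by
    obtain ⟨v, rfl, hv⟩ := exists_weight_take_eq_factorWeight hgf w n (by omega)
    obtain ⟨a, ha⟩ := hgf w (v.length + 1) (by omega) hn
    refine ⟨v ++ [a], by simp, fun k hk => ?_⟩
    rcases Nat.lt_or_eq_of_le hk with hk | rfl
    · rw [List.take_append_of_le_length (by omega), hv k (by omega)]
    · rw [List.take_of_length_le (by simp), weight_append, ha, Nat.add_sub_cancel,
        ← hv _ le_rfl, List.take_length, weight_singleton]

theorem pnClass_nonempty (hgf : Gapfree μ) (w : List α) : (pnClass μ w).Nonempty :=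
  have ⟨v, hlen, hv⟩ := exists_weight_take_eq_factorWeight hgf w w.length le_rfl
  ⟨v, mem_pnClass_of_weight_take_eq hlen hv⟩

theorem eq_of_weight_take_eq (hinj : Function.Injective μ) {u v : List α}
    (hlen : u.length = v.length) (h : ∀ i ≤ u.length, weight μ (u.take i) = weight μ (v.take i)) :
    u = v := by
  refine List.ext_getElem hlen fun k hu hv => hinj <| mul_left_cancel (a := weight μ (u.take k)) ?_
  rw [← weight_take_succ hu, h k hu.le, h (k + 1) hu, weight_take_succ hv]

theorem pnClass_subsingleton (hμ : ∀ a, 1 < μ a) (hinj : Function.Injective μ) (w : List α) :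
    (pnClass μ w).Subsingleton := by
  rintro u ⟨hfu, hpu⟩ v ⟨hfv, hpv⟩
  have hlen : u.length = v.length :=
    length_eq_of_factorWeight_eq hμ fun i => (hfu i).trans (hfv i).symm
  exact eq_of_weight_take_eq hinj hlen fun i hi => by
    rw [← hpu i hi, ← hpv i (hlen ▸ hi), hfu, hfv]

theorem gapfree_of_forall_pnClass_nonempty (hμ : ∀ a, 1 < μ a)
    (h : ∀ w : List α, (pnClass μ w).Nonempty) : Gapfree μ := by
  intro w i hi1 hi2
  obtain ⟨v, hfv, hpv⟩ := h w
  obtain ⟨k, rfl⟩ := Nat.exists_eq_add_of_le' hi1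
  have hk : k < v.length := by rw [length_eq_of_factorWeight_eq hμ hfv]; omega
  exact ⟨v[k], by rw [← hfv, ← hfv, Nat.add_sub_cancel, hpv.factorWeight_succ hk]⟩

theorem injective_of_forall_pnClass_subsingleton (hμ : ∀ a, 1 < μ a)
    (h : ∀ w : List α, (pnClass μ w).Subsingleton) : Function.Injective μ := by
  have singleton_mem (a b : α) (hab : μ a = μ b) : [b] ∈ pnClass μ [a] :=
    ⟨fun i => by rw [factorWeight_eq_of_map_eq (by simp [hab] : [b].map μ = [a].map μ)],
      prefixNormal_singleton hμ b⟩
  intro a b hab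
  simpa using h [a] (singleton_mem a a rfl) (singleton_mem a b hab)

end WeightMeasure

theorem forall_pnClass_unique_iff_gapfree_and_injective_general {α A : Type*}
    [CommMonoid A] [LinearOrder A] [IsOrderedCancelMonoid A] (μ : α → A) (hμ : ∀ a : α, 1 < μ a) :
    (∀ w : List α, ∃! v : List α, v ∈ pnClass μ w) ↔
      (Gapfree μ ∧ Function.Injective μ) := by
  refine ⟨fun h => ⟨?_, ?_⟩, fun ⟨hgf, hinj⟩ w => ?_⟩
  · exact gapfree_of_forall_pnClass_nonempty hμ fun w => (h w).exists
  · exact injective_of_forall_pnClass_subsingleton hμ fun w _ hu _ hv => (h w).unique hu hv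
  · obtain ⟨v, hv⟩ := pnClass_nonempty hgf w
    exact ⟨v, hv, fun u hu => pnClass_subsingleton hμ hinj w hu hv⟩

/-- Every word `w` satisfies `|P_μ(w)| = 1` iff `μ` is both gapfree and injective. -/
theorem forall_pnClass_unique_iff_gapfree_and_injective {α A : Type*} [Fintype α]
    [CommMonoid A] [LinearOrder A] [IsOrderedCancelMonoid A] (μ : α → A) (hμ : ∀ a : α, 1 < μ a) :
    (∀ w : List α, ∃! v : List α, v ∈ pnClass μ w) ↔
      (Gapfree μ ∧ Function.Injective μ) :=
  forall_pnClass_unique_iff_gapfree_and_injective_general μ hμ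
end

section
/- Let Σ be a strictly totally ordered finite alphabet with more than two letters and let μ be a non-binary, injective, alphabetically ordered weight measure over Σ with values in a linearly ordered cancellative commutative monoid A. The following are equivalent: (1) μ is gapfree; (2) μ has no gap over any word of the form c·a·c·b where a < b < c are letters of Σ; (3) μ is equivalent to the standard weight measure μ_Σ. -/
/-- The additive weight of a word with respect to weights in `(ℕ,+)`. -/
def weightAdd {α : Type*} (ν : α → ℕ) (w : List α) : ℕ := (w.map ν).sum

/-- The standard weight measure of the strictly totally ordered alphabet
`Σ = {a_1 < … < a_n}` (modelled as `Fin n`): `μ_Σ(a_i) = i`, with values in `(ℕ,+)`. -/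
def standardWeightMeasure (n : ℕ) : Fin n → ℕ := fun a => (a : ℕ) + 1

/-!
Condition (2) at `i = 3` compares `f(3) = μ(c) μ(a) μ(c)` with `f(2) = μ(c) μ(b)`: for all
letters `a < b < c` some letter `x` satisfies `μ(b) μ(x) = μ(a) μ(c)`. With `a = a₁`, `b = a₂`
and `c = a_{k+2}`, strict monotonicity forces `x = a_{k+1}`, so the weights form a geometric
progression, `μ(a_i) μ(a₁)^i μ(a₂) = μ(a₁)^2 μ(a₂)^i`. Multiplying out over a word `v` gives
`μ(v) μ(a₁)^{μ_Σ(v)} μ(a₂)^{|v|} = μ(a₁)^{2|v|} μ(a₂)^{μ_Σ(v)}`, and since `μ(a₁) < μ(a₂)` two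
words of the same length compare under `μ` as they do under `μ_Σ`.

Conversely, if `μ` is equivalent to `μ_Σ`, the heaviest factors of lengths `i - 1` and `i` are
also the heaviest for `μ_Σ`, and their standard weights differ by at least `1` (extend the
shorter one by a letter) and at most `n` (drop the last letter of the longer one); this
difference is the standard weight of a letter, whose `μ`-weight closes the gap.
-/

section Factors

variable {α A : Type*} [CommMonoid A] [LinearOrder A] [IsOrderedCancelMonoid A] {μ : α → A}
  {w u v : List α} {i : ℕ}

theorem List.foldr_max_mem_s10 {β : Type*} [LinearOrder β] {b : β} :
    ∀ {l : List β}, l ≠ [] → (∀ z ∈ l, b ≤ z) → l.foldr max b ∈ l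
  | [], h, _ => absurd rfl h
  | [a], _, hb => by simp [max_eq_left (hb a (by simp))]
  | a :: c :: t, _, hb => by
    have ih := List.foldr_max_mem_s10 (List.cons_ne_nil c t) fun z hz => hb z (by simp [hz])
    rw [List.foldr_cons]
    rcases max_choice a ((c :: t).foldr max b) with h | h <;> rw [h] <;> simp_all

def factors (w : List α) (i : ℕ) : List (List α) :=
  (List.range (w.length + 1 - i)).map fun j => (w.drop j).take i

theorem mem_factors : u ∈ factors w i ↔ ∃ j < w.length + 1 - i, (w.drop j).take i = u := by
  simp [factors]

theorem length_of_mem_factors (hu : u ∈ factors w i) : u.length = i := by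
  obtain ⟨j, hj, rfl⟩ := mem_factors.1 hu
  simp only [List.length_take, List.length_drop]
  omega

theorem factorWeight_eq_foldr_max (μ : α → A) (w : List α) (i : ℕ) :
    factorWeight μ w i = ((factors w i).map (weight μ)).foldr max 1 := by
  simp only [factorWeight, factors, List.map_map]
  rfl

theorem weight_le_factorWeight (hu : u ∈ factors w i) : weight μ u ≤ factorWeight μ w i :=
  factorWeight_eq_foldr_max μ w i ▸ List.le_max_of_le' 1 (List.mem_map_of_mem hu) le_rfl

theorem exists_mem_factors_factorWeight_eq (hμ : ∀ a, 1 ≤ μ a) (hi : i ≤ w.length) :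
    ∃ u ∈ factors w i, factorWeight μ w i = weight μ u := by
  have hne : (factors w i).map (weight μ) ≠ [] := by
    simp only [factors, List.map_map, ne_eq, List.map_eq_nil_iff, List.range_eq_nil]
    omega
  have hone : ∀ z ∈ (factors w i).map (weight μ), 1 ≤ z := by
    simp only [List.mem_map, forall_exists_index, and_imp, forall_apply_eq_imp_iff₂]
    exact fun u _ => List.one_le_prod_of_one_le (by simpa using fun a _ => hμ a)
  obtain ⟨u, hu, hfu⟩ := List.mem_map.1 (List.foldr_max_mem_s10 hne hone)
  exact ⟨u, hu, (factorWeight_eq_foldr_max μ w i).trans hfu.symm⟩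

theorem mem_factors_of_append_singleton {a : α} (h : u ++ [a] ∈ factors w (i + 1)) :
    u ∈ factors w i := by
  have hlen : u.length = i := by simpa using length_of_mem_factors h
  obtain ⟨j, hj, hju⟩ := mem_factors.1 h
  refine mem_factors.2 ⟨j, by omega, ?_⟩
  have htake : (w.drop j).take i = ((w.drop j).take (i + 1)).take i := by
    rw [List.take_take, min_eq_left (Nat.le_succ i)]
  rw [htake, hju, List.take_left' hlen]

theorem exists_extension_mem_factors (hi : i < w.length) (hv : v ∈ factors w i) :
    ∃ a, v ++ [a] ∈ factors w (i + 1) ∨ a :: v ∈ factors w (i + 1) := by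
  obtain ⟨j, hj, rfl⟩ := mem_factors.1 hv
  by_cases hright : j + i < w.length
  · refine ⟨w[j + i], Or.inl (mem_factors.2 ⟨j, by omega, ?_⟩)⟩
    rw [List.take_add_one, List.getElem?_drop, List.getElem?_eq_getElem hright]
    rfl
  · refine ⟨w[j - 1], Or.inr (mem_factors.2 ⟨j - 1, by omega, ?_⟩)⟩
    rw [List.drop_eq_getElem_cons (by omega), Nat.sub_add_cancel (by omega), List.take_succ_cons]

end Factors

section Comparison

variable {α A : Type*} [CommMonoid A] [LinearOrder A] [IsOrderedCancelMonoid A]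

theorem pow_mul_pow_lt_pow_mul_pow_iff {x y : A} (hxy : x < y) {p q : ℕ} :
    y ^ p * x ^ q < y ^ q * x ^ p ↔ p < q := by
  have hlt : ∀ {p q : ℕ}, p < q → y ^ p * x ^ q < y ^ q * x ^ p := by
    intro p q hpq
    obtain ⟨d, rfl⟩ := Nat.exists_eq_add_of_lt hpq
    calc y ^ p * x ^ (p + d + 1) = y ^ p * x ^ p * x ^ (d + 1) := by
          rw [add_assoc, pow_add, mul_assoc]
      _ < y ^ p * x ^ p * y ^ (d + 1) := mul_lt_mul_right (pow_lt_pow_left' d.succ_ne_zero hxy) _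
      _ = y ^ (p + d + 1) * x ^ p := by rw [add_assoc, pow_add y p]; ac_rfl
  refine ⟨fun h => lt_of_not_ge fun hqp => ?_, hlt⟩
  rcases hqp.eq_or_lt with rfl | hqp
  · exact lt_irrefl _ h
  · exact (hlt hqp).asymm h

theorem weight_mul_pow_weightAdd {μ : α → A} {ν : α → ℕ} {x y z : A}
    (h : ∀ a, μ a * x ^ ν a * y = z * y ^ ν a) (v : List α) :
    weight μ v * x ^ weightAdd ν v * y ^ v.length = z ^ v.length * y ^ weightAdd ν v := by
  induction v with
  | nil => simp [weight, weightAdd]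
  | cons a t ih =>
    have hw : weight μ (a :: t) = μ a * weight μ t := List.prod_cons
    have hs : weightAdd ν (a :: t) = ν a + weightAdd ν t := List.sum_cons
    calc weight μ (a :: t) * x ^ weightAdd ν (a :: t) * y ^ (a :: t).length
        = (μ a * x ^ ν a * y) * (weight μ t * x ^ weightAdd ν t * y ^ t.length) := by
          rw [hw, hs, List.length_cons, pow_add x, pow_succ y]; ac_rfl
      _ = z ^ (a :: t).length * y ^ weightAdd ν (a :: t) := by
          rw [h, ih, hs, List.length_cons, pow_add y, pow_succ z]; ac_rfl

theorem weight_lt_weight_iff_of_mul_pow_eq {μ : α → A} {ν : α → ℕ} {x y z : A} (hxy : x < y)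
    (h : ∀ a, μ a * x ^ ν a * y = z * y ^ ν a) {v w : List α} (hlen : v.length = w.length) :
    weight μ v < weight μ w ↔ weightAdd ν v < weightAdd ν w := by
  set p := weightAdd ν v
  set q := weightAdd ν w
  have hv : weight μ v * (x ^ p * y ^ v.length * x ^ q) = z ^ v.length * (y ^ p * x ^ q) := by
    rw [← mul_assoc, ← mul_assoc, weight_mul_pow_weightAdd h, mul_assoc]
  have hw : weight μ w * (x ^ p * y ^ v.length * x ^ q) = z ^ v.length * (y ^ q * x ^ p) := by
    rw [hlen, show weight μ w * (x ^ p * y ^ w.length * x ^ q)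
      = weight μ w * x ^ q * y ^ w.length * x ^ p by ac_rfl, weight_mul_pow_weightAdd h, mul_assoc]
  rw [← mul_lt_mul_iff_right (x ^ p * y ^ v.length * x ^ q), hv, hw, mul_lt_mul_iff_left,
    pow_mul_pow_lt_pow_mul_pow_iff hxy]

end Comparison

section Cacb

variable {α A : Type*} [CommMonoid A] [LinearOrder A] [IsOrderedCancelMonoid A] {μ : α → A}
  {a b c : α}

theorem factorWeight_cacb_two (hμ : ∀ a, 1 ≤ μ a) (hab : μ a ≤ μ b) :
    factorWeight μ [c, a, c, b] 2 = μ c * μ b := by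
  have hca : μ c * μ a ≤ μ c * μ b := by gcongr
  have hac : μ a * μ c ≤ μ c * μ b := mul_comm (μ c) (μ a) ▸ hca
  have hmax : factorWeight μ [c, a, c, b] 2
      = max (μ c * μ a) (max (μ a * μ c) (max (μ c * μ b) 1)) := by
    simp [factorWeight, weight, List.range_succ]
  rw [hmax, max_eq_left (one_le_mul (hμ c) (hμ b)), max_eq_right hac, max_eq_right hca]

theorem factorWeight_cacb_three (hμ : ∀ a, 1 ≤ μ a) (hbc : μ b ≤ μ c) :
    factorWeight μ [c, a, c, b] 3 = μ c * (μ a * μ c) := by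
  have hmax : factorWeight μ [c, a, c, b] 3
      = max (μ c * (μ a * μ c)) (max (μ a * (μ c * μ b)) 1) := by
    simp [factorWeight, weight, List.range_succ]
  have hacb : μ a * (μ c * μ b) ≤ μ c * (μ a * μ c) :=
    calc μ a * (μ c * μ b) ≤ μ a * (μ c * μ c) := by gcongr
      _ = μ c * (μ a * μ c) := by ac_rfl
  rw [hmax, max_eq_left (one_le_mul (hμ a) (one_le_mul (hμ c) (hμ b))), max_eq_left hacb]

theorem mul_eq_mul_of_factorWeight_cacb (hμ : ∀ a, 1 ≤ μ a) (hab : μ a ≤ μ b) (hbc : μ b ≤ μ c)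
    {x : α} (h : factorWeight μ [c, a, c, b] 3 = factorWeight μ [c, a, c, b] 2 * μ x) :
    μ b * μ x = μ a * μ c := by
  rw [factorWeight_cacb_three hμ hbc, factorWeight_cacb_two hμ hab, mul_assoc] at h
  exact (mul_left_cancel h).symm

end Cacb

section Equivalence

variable {n : ℕ} {A : Type*} [CommMonoid A] [LinearOrder A] [IsOrderedCancelMonoid A]
  {μ : Fin n → A}

def EquivalentToStandard (μ : Fin n → A) : Prop :=
  ∀ v w : List (Fin n), v.length = w.length →
    (weight μ v < weight μ w ↔
      weightAdd (standardWeightMeasure n) v < weightAdd (standardWeightMeasure n) w)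

theorem weightAdd_standard_append_singleton (v : List (Fin n)) (a : Fin n) :
    weightAdd (standardWeightMeasure n) (v ++ [a])
      = weightAdd (standardWeightMeasure n) v + (a + 1) := by
  simp [weightAdd, standardWeightMeasure]

theorem weightAdd_standard_cons (v : List (Fin n)) (a : Fin n) :
    weightAdd (standardWeightMeasure n) (a :: v)
      = weightAdd (standardWeightMeasure n) v + (a + 1) := by
  simp [weightAdd, standardWeightMeasure, add_comm]

namespace EquivalentToStandard

theorem weight_eq (h : EquivalentToStandard μ) {u v : List (Fin n)} (hlen : u.length = v.length)
    (hW : weightAdd (standardWeightMeasure n) u = weightAdd (standardWeightMeasure n) v) :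
    weight μ u = weight μ v :=
  le_antisymm (not_lt.1 fun hlt => ((h v u hlen.symm).1 hlt).ne' hW)
    (not_lt.1 fun hlt => ((h u v hlen).1 hlt).ne hW)

theorem weightAdd_le_of_factorWeight_eq (h : EquivalentToStandard μ) {w u u' : List (Fin n)}
    {j : ℕ} (hu : u ∈ factors w j) (hfu : factorWeight μ w j = weight μ u)
    (hu' : u' ∈ factors w j) :
    weightAdd (standardWeightMeasure n) u' ≤ weightAdd (standardWeightMeasure n) u :=
  le_of_not_gt fun hlt =>
    ((h _ _ ((length_of_mem_factors hu).trans (length_of_mem_factors hu').symm)).2 hlt).not_ge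
      (hfu ▸ weight_le_factorWeight hu')

theorem gapfree (h : EquivalentToStandard μ) (hμ : ∀ a, 1 ≤ μ a) : Gapfree μ := by
  intro w i hi hiw
  obtain ⟨k, rfl⟩ : ∃ k, i = k + 1 := ⟨i - 1, by omega⟩
  rw [Nat.add_sub_cancel]
  obtain ⟨u, hu, hfu⟩ := exists_mem_factors_factorWeight_eq hμ hiw
  obtain ⟨v, hv, hfv⟩ := exists_mem_factors_factorWeight_eq hμ (k.le_succ.trans hiw)
  have hlower :
      weightAdd (standardWeightMeasure n) v + 1 ≤ weightAdd (standardWeightMeasure n) u := by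
    obtain ⟨a, ha | ha⟩ := exists_extension_mem_factors hiw hv
    · have := h.weightAdd_le_of_factorWeight_eq hu hfu ha
      rw [weightAdd_standard_append_singleton] at this
      omega
    · have := h.weightAdd_le_of_factorWeight_eq hu hfu ha
      rw [weightAdd_standard_cons] at this
      omega
  have hupper :
      weightAdd (standardWeightMeasure n) u ≤ weightAdd (standardWeightMeasure n) v + n := by
    obtain ⟨u', b, rfl⟩ := u.eq_nil_or_concat'.resolve_left fun hnil => by
      simpa [hnil] using length_of_mem_factors hu
    have := h.weightAdd_le_of_factorWeight_eq hv hfv (mem_factors_of_append_singleton hu)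
    rw [weightAdd_standard_append_singleton]
    omega
  let b : Fin n :=
    ⟨weightAdd (standardWeightMeasure n) u - weightAdd (standardWeightMeasure n) v - 1, by omega⟩
  have hWu : weightAdd (standardWeightMeasure n) u
      = weightAdd (standardWeightMeasure n) (v ++ [b]) := by
    rw [weightAdd_standard_append_singleton]
    dsimp only [b]
    omega
  refine ⟨b, ?_⟩
  rw [hfu, hfv, h.weight_eq (by simp [length_of_mem_factors hu, length_of_mem_factors hv]) hWu]
  simp [weight]

end EquivalentToStandard

end Equivalence

section Progression

variable {n : ℕ} {A : Type*} [CommMonoid A] [LinearOrder A] [IsOrderedCancelMonoid A]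
  {μ : Fin n → A}

theorem apply_succ_mul_apply_zero (hsm : StrictMono μ)
    (hmid : ∀ a b c : Fin n, a < b → b < c → ∃ x, μ b * μ x = μ a * μ c) :
    ∀ (k : ℕ) (hk : k + 1 < n),
      μ ⟨k + 1, hk⟩ * μ ⟨0, by omega⟩ = μ ⟨k, by omega⟩ * μ ⟨1, by omega⟩
  | 0, _ => mul_comm _ _
  | k + 1, hk => by
    obtain ⟨x, hx⟩ := hmid ⟨0, by omega⟩ ⟨1, by omega⟩ ⟨k + 2, hk⟩
      (Fin.mk_lt_mk.2 Nat.zero_lt_one) (Fin.mk_lt_mk.2 (by omega))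
    have hlo : μ ⟨1, by omega⟩ * μ ⟨k, by omega⟩ < μ ⟨1, by omega⟩ * μ x := by
      rw [hx, mul_comm, ← apply_succ_mul_apply_zero hsm hmid k (by omega), mul_comm]
      exact mul_lt_mul_right (hsm (Fin.mk_lt_mk.2 (by omega))) _
    have hhi : μ ⟨1, by omega⟩ * μ x < μ ⟨1, by omega⟩ * μ ⟨k + 2, hk⟩ := by
      rw [hx]
      exact mul_lt_mul_left (hsm (Fin.mk_lt_mk.2 Nat.zero_lt_one)) _
    have hxk : x = ⟨k + 1, by omega⟩ := by
      have h₁ := hsm.lt_iff_lt.1 (lt_of_mul_lt_mul_left' hlo)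
      have h₂ := hsm.lt_iff_lt.1 (lt_of_mul_lt_mul_left' hhi)
      simp only [Fin.lt_def] at h₁ h₂
      exact Fin.ext (show (x : ℕ) = k + 1 by omega)
    rw [mul_comm, ← hx, hxk, mul_comm]

theorem apply_mul_pow_standardWeightMeasure (hsm : StrictMono μ)
    (hmid : ∀ a b c : Fin n, a < b → b < c → ∃ x, μ b * μ x = μ a * μ c) (hn : 1 < n)
    (a : Fin n) :
    μ a * μ ⟨0, by omega⟩ ^ standardWeightMeasure n a * μ ⟨1, hn⟩
      = μ ⟨0, by omega⟩ ^ 2 * μ ⟨1, hn⟩ ^ standardWeightMeasure n a := by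
  obtain ⟨k, hk⟩ := a
  show μ ⟨k, hk⟩ * μ ⟨0, by omega⟩ ^ (k + 1) * μ ⟨1, hn⟩
    = μ ⟨0, by omega⟩ ^ 2 * μ ⟨1, hn⟩ ^ (k + 1)
  induction k with
  | zero => rw [pow_one, pow_one, pow_two]
  | succ k ih =>
    calc μ ⟨k + 1, hk⟩ * μ ⟨0, by omega⟩ ^ (k + 2) * μ ⟨1, hn⟩
        = μ ⟨k + 1, hk⟩ * μ ⟨0, by omega⟩ * (μ ⟨0, by omega⟩ ^ (k + 1) * μ ⟨1, hn⟩) := by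
          rw [pow_succ]; ac_rfl
      _ = μ ⟨k, by omega⟩ * μ ⟨0, by omega⟩ ^ (k + 1) * μ ⟨1, hn⟩ * μ ⟨1, hn⟩ := by
          rw [apply_succ_mul_apply_zero hsm hmid k hk]; ac_rfl
      _ = μ ⟨0, by omega⟩ ^ 2 * μ ⟨1, hn⟩ ^ (k + 2) := by
          rw [ih (by omega), pow_succ (μ ⟨1, hn⟩) (k + 1), mul_assoc]

theorem equivalentToStandard_of_exists_mul_eq (hsm : StrictMono μ)
    (hmid : ∀ a b c : Fin n, a < b → b < c → ∃ x, μ b * μ x = μ a * μ c) (hn : 1 < n) :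
    EquivalentToStandard μ := fun _ _ hlen =>
  weight_lt_weight_iff_of_mul_pow_eq (hsm (Fin.mk_lt_mk.2 Nat.zero_lt_one))
    (apply_mul_pow_standardWeightMeasure hsm hmid hn) hlen

end Progression

theorem gapfree_tfae_general {n : ℕ} (hn : 2 < n) {A : Type*}
    [CommMonoid A] [LinearOrder A] [IsOrderedCancelMonoid A] (μ : Fin n → A) (hμ : ∀ a, 1 < μ a)
    (hinj : Function.Injective μ) (hmono : Monotone μ) :
    List.TFAE
      [Gapfree μ,
       ∀ a b c : Fin n, a < b → b < c →
         ∀ i, 1 ≤ i → i ≤ 4 →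
           ∃ x : Fin n, factorWeight μ [c, a, c, b] i
             = factorWeight μ [c, a, c, b] (i - 1) * μ x,
       ∀ v w : List (Fin n), v.length = w.length →
         (weight μ v < weight μ w ↔
           weightAdd (standardWeightMeasure n) v < weightAdd (standardWeightMeasure n) w)] := by
  have hμ' : ∀ a, 1 ≤ μ a := fun a => (hμ a).le
  tfae_have 1 → 2 := fun h _ _ _ _ _ i hi₁ hi₄ => h _ i hi₁ hi₄
  tfae_have 2 → 3 := by
    refine fun h => equivalentToStandard_of_exists_mul_eq
      (hmono.strictMono_of_injective hinj) (fun a b c hab hbc => ?_) (by omega)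
    obtain ⟨x, hx⟩ := h a b c hab hbc 3 (by norm_num) (by norm_num)
    exact ⟨x, mul_eq_mul_of_factorWeight_cacb hμ' (hmono hab.le) (hmono hbc.le) hx⟩
  tfae_have 3 → 1 := fun h => EquivalentToStandard.gapfree h hμ'
  tfae_finish

/-- For a non-binary, injective, alphabetically ordered weight measure `μ` over the
strictly totally ordered alphabet `Fin n` (`n > 2`), the following are equivalent:
(1) `μ` is gapfree;
(2) `μ` has no gap over any word of the form `c·a·c·b` with `a < b < c`;
(3) `μ` is equivalent to the standard weight measure `μ_Σ`. -/
theorem gapfree_tfae {n : ℕ} (hn : 2 < n) {A : Type*} [DecidableEq A]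
    [CommMonoid A] [LinearOrder A] [IsOrderedCancelMonoid A] (μ : Fin n → A) (hμ : ∀ a, 1 < μ a)
    (hnonbin : 2 < (Finset.univ.image μ).card)
    (hinj : Function.Injective μ) (hmono : Monotone μ) :
    List.TFAE
      [Gapfree μ,
       ∀ a b c : Fin n, a < b → b < c →
         ∀ i, 1 ≤ i → i ≤ 4 →
           ∃ x : Fin n, factorWeight μ [c, a, c, b] i
             = factorWeight μ [c, a, c, b] (i - 1) * μ x,
       ∀ v w : List (Fin n), v.length = w.length →
         (weight μ v < weight μ w ↔
           weightAdd (standardWeightMeasure n) v < weightAdd (standardWeightMeasure n) w)] :=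
  gapfree_tfae_general hn μ hμ hinj hmono
end
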